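/- In a system (S, (L_x), (Ω_{x,y})) satisfying the minimal axioms, if x ξ x′ and y ξ y′ in S, then (x ∨ y) ξ (x′ ∨ y′). -/

import Mathlib

/-- A partial bijection from `A` to `B`, modeled as a functional and injective
relation `R : A → B → Prop`.  Its domain is `rdom R` and its image is `rim R`. -/
def IsPartialBij {A : Type u} {B : Type v} (R : A → B → Prop) : Prop :=
  (∀ a b b', R a b → R a b' → b = b') ∧ (∀ a a' b, R a b → R a' b → a = a')

/-- The domain of a partial bijection (as a relation). -/
def rdom {A : Type u} {B : Type v} (R : A → B → Prop) : Set A := {a | ∃ b, R a b}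

/-- The image of a partial bijection (as a relation). -/
def rim {A : Type u} {B : Type v} (R : A → B → Prop) : Set B := {b | ∃ a, R a b}

/-- A (nonempty) filter of a lattice: an up-set closed under meets. -/
def IsLatFilter {A : Type u} [Lattice A] (F : Set A) : Prop :=
  F.Nonempty ∧ (∀ a ∈ F, ∀ b, a ≤ b → b ∈ F) ∧ (∀ a ∈ F, ∀ b ∈ F, a ⊓ b ∈ F)

/-- A (nonempty) ideal of a lattice: a down-set closed under joins. -/
def IsLatIdeal {A : Type u} [Lattice A] (I : Set A) : Prop :=
  I.Nonempty ∧ (∀ a ∈ I, ∀ b, b ≤ a → b ∈ I) ∧ (∀ a ∈ I, ∀ b ∈ I, a ⊔ b ∈ I)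

/-- A relation between lattices preserves joins and meets; together with
`IsPartialBij` this says the relation is a lattice isomorphism from its
domain onto its image. -/
def IsLatHomRel {A : Type u} {B : Type v} [Lattice A] [Lattice B]
    (R : A → B → Prop) : Prop :=
  (∀ a a' b b', R a b → R a' b' → R (a ⊔ a') (b ⊔ b')) ∧
  (∀ a a' b b', R a b → R a' b' → R (a ⊓ a') (b ⊓ b'))

/-- `ChainComp L Ω a b f` says there is a saturated chain
`a = x₀ ⋖ x₁ ⋖ ⋯ ⋖ xₙ = b` in `S` such that `f` is the composite
`Ω_{x_{n-1},x_n} ∘ ⋯ ∘ Ω_{x_0,x_1}` (the identity relation when `a = b`). -/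
inductive ChainComp {S : Type u} [Lattice S] (L : S → Type v)
    (Ω : ∀ x y : S, x ⋖ y → L x → L y → Prop) : ∀ a b : S, (L a → L b → Prop) → Prop
  | refl (a : S) : ChainComp L Ω a a (fun u v => u = v)
  | cons {a b c : S} (h : a ⋖ b) {f : L b → L c → Prop}
      (hf : ChainComp L Ω b c f) : ChainComp L Ω a c (Relation.Comp (Ω a b h) f)

/-- The minimal axioms for a polytone system `(S, (L x), Ω)`:
(PS1⁻) `S` is l.f.f.c.; (PS2⁻) the blocks are finite, modular, complemented;
(PS3⁻) each connection `Ω x y h` (for a cover `x ⋖ y`) is a partial bijection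
whose domain is a filter, whose image is an ideal, and which is a lattice
isomorphism; (PS6⁻∧), (PS7⁻∧), (PS8⁻∨) as in the paper. -/
def MinimalAxioms {S : Type u} [Lattice S] (L : S → Type v)
    [∀ x, Lattice (L x)] [∀ x, BoundedOrder (L x)]
    (Ω : ∀ x y : S, x ⋖ y → L x → L y → Prop) : Prop :=
  -- (PS1⁻) S is l.f.f.c.
  (∀ a b : S, (Set.Icc a b).Finite) ∧
  (∀ a : S, {b | a ⋖ b}.Finite) ∧
  (∀ a : S, {b | b ⋖ a}.Finite) ∧
  -- (PS2⁻) blocks are f.m.c.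
  (∀ x, Finite (L x)) ∧
  (∀ x, IsModularLattice (L x)) ∧
  (∀ x, ComplementedLattice (L x)) ∧
  -- (PS3⁻)
  (∀ x y : S, ∀ h : x ⋖ y, IsPartialBij (Ω x y h) ∧ IsLatFilter (rdom (Ω x y h)) ∧
    IsLatIdeal (rim (Ω x y h)) ∧ IsLatHomRel (Ω x y h)) ∧
  -- (PS6⁻∧)
  (∀ x y : S, ∀ (hx : x ⊓ y ⋖ x) (hy : x ⊓ y ⋖ y),
    ∃ (f : L x → L (x ⊔ y) → Prop) (g : L y → L (x ⊔ y) → Prop),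
      ChainComp L Ω x (x ⊔ y) f ∧ ChainComp L Ω y (x ⊔ y) g ∧
      Relation.Comp (Ω (x ⊓ y) x hx) f = Relation.Comp (Ω (x ⊓ y) y hy) g) ∧
  -- (PS7⁻∧)
  (∀ x y : S, ∀ (hx : x ⊓ y ⋖ x) (hy : x ⊓ y ⋖ y),
    ∃ h : L (x ⊓ y) → L (x ⊔ y) → Prop, ChainComp L Ω (x ⊓ y) (x ⊔ y) h ∧
      rdom (Ω (x ⊓ y) x hx) ∩ rdom (Ω (x ⊓ y) y hy) ⊆ rdom h) ∧
  -- (PS8⁻∨)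
  (∀ x y : S, ∀ (hx : x ⋖ x ⊔ y) (hy : y ⋖ x ⊔ y),
    ∃ h : L (x ⊓ y) → L (x ⊔ y) → Prop, ChainComp L Ω (x ⊓ y) (x ⊔ y) h ∧
      rim (Ω x (x ⊔ y) hx) ∩ rim (Ω y (x ⊔ y) hy) ⊆ rim h)

section PolytoneAux

variable {S : Type u} [Lattice S] {L : S → Type v}
  [∀ x, Lattice (L x)] [∀ x, BoundedOrder (L x)]
  {Ω : ∀ x y : S, x ⋖ y → L x → L y → Prop}

lemma cc_le {a b : S} {f : L a → L b → Prop} (h : ChainComp L Ω a b f) : a ≤ b := by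
  induction h with
  | refl a => exact le_rfl
  | cons h _ ih => exact h.le.trans ih

lemma cc_refl_eq {a : S} {f : L a → L a → Prop} (h : ChainComp L Ω a a f) :
    f = fun u v => u = v := by
  cases h with
  | refl => rfl
  | cons hc hf => exact absurd (cc_le hf) hc.lt.not_ge

lemma cc_comp {a b c : S} {f : L a → L b → Prop} {g : L b → L c → Prop}
    (hf : ChainComp L Ω a b f) (hg : ChainComp L Ω b c g) :
    ChainComp L Ω a c (Relation.Comp f g) := by
  induction hf with
  | refl a => rw [Relation.eq_comp]; exact hg
  | cons h _ ih => rw [Relation.comp_assoc]; exact ChainComp.cons h (ih hg)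

lemma exists_covby_le (hfin : ∀ a b : S, (Set.Icc a b).Finite) {a b : S} (h : a < b) :
    ∃ s : S, a ⋖ s ∧ s ≤ b := by
  have hf : ({c | a < c ∧ c ≤ b}).Finite :=
    (hfin a b).subset (by rintro c ⟨h1, h2⟩; exact ⟨h1.le, h2⟩)
  obtain ⟨s, -, hs, hmin⟩ := hf.exists_le_minimal (a := b) ⟨h, le_rfl⟩
  refine ⟨s, ⟨hs.1, fun c hac hcs => ?_⟩, hs.2⟩
  exact (hmin (y := c) ⟨hac, hcs.le.trans hs.2⟩ hcs.le).not_gt hcs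

lemma covby_meet {a s t : S} (hs : a ⋖ s) (ht : a ⋖ t) (hst : s ≠ t) : s ⊓ t = a := by
  rcases (le_inf hs.lt.le ht.lt.le).lt_or_eq with h | h
  · exfalso
    rcases (inf_le_left : s ⊓ t ≤ s).lt_or_eq with h1 | h1
    · exact hs.2 h h1
    · have hstle : s ≤ t := h1 ▸ inf_le_right
      rcases hstle.lt_or_eq with h3 | h3
      · exact ht.2 (h1 ▸ h) h3
      · exact hst h3
  · exact h.symm

lemma icc_ssub (hfin : ∀ a b : S, (Set.Icc a b).Finite) {a a' b b' : S}
    (h1 : a < a') (h2 : a' ≤ b') (h3 : b' ≤ b) (h4 : a ≤ b) :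
    (Set.Icc a' b').ncard < (Set.Icc a b).ncard := by
  refine Set.ncard_lt_ncard ?_ (hfin a b)
  constructor
  · rintro c ⟨hc1, hc2⟩; exact ⟨h1.le.trans hc1, hc2.trans h3⟩
  · intro hsub
    have : a ∈ Set.Icc a' b' := hsub ⟨le_rfl, h4⟩
    exact absurd this.1 h1.not_ge

lemma cc_exists (hfin : ∀ a b : S, (Set.Icc a b).Finite) :
    ∀ n : ℕ, ∀ a b : S, a ≤ b → (Set.Icc a b).ncard ≤ n →
      ∃ f : L a → L b → Prop, ChainComp L Ω a b f := by
  intro n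
  induction n with
  | zero =>
    intro a b hab hcard
    have hpos := (Set.ncard_pos (hfin a b)).mpr ⟨a, le_rfl, hab⟩
    omega
  | succ n ih =>
    intro a b hab hcard
    rcases hab.lt_or_eq with h | h
    · obtain ⟨s, hs, hsb⟩ := exists_covby_le hfin h
      obtain ⟨f, hf⟩ := ih s b hsb
        (Nat.lt_succ_iff.mp ((icc_ssub hfin hs.lt hsb le_rfl hab).trans_le hcard))
      exact ⟨_, ChainComp.cons hs hf⟩
    · subst h; exact ⟨_, ChainComp.refl a⟩

lemma cc_unique (hmin : MinimalAxioms L Ω) :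
    ∀ n : ℕ, ∀ a b : S, ∀ f g : L a → L b → Prop, (Set.Icc a b).ncard ≤ n →
      ChainComp L Ω a b f → ChainComp L Ω a b g → f = g := by
  obtain ⟨hIcc, -, -, -, -, -, hPS3, hPS6, -, -⟩ := hmin
  intro n
  induction n with
  | zero =>
    intro a b f g hcard hf _
    have hpos := (Set.ncard_pos (hIcc a b)).mpr ⟨a, le_rfl, cc_le hf⟩
    omega
  | succ n ih =>
    intro a b f g hcard hf hg
    rcases (cc_le hf).lt_or_eq with hab | hab
    · cases hf with
      | refl => exact absurd hab (lt_irrefl a)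
      | cons hs hf' =>
        cases hg with
        | refl => exact absurd hab (lt_irrefl a)
        | cons ht hg' =>
          rename_i s f' t g'
          by_cases hst : s = t
          · subst hst
            rw [ih s b f' g'
              (Nat.lt_succ_iff.mp ((icc_ssub hIcc hs.lt (cc_le hf') le_rfl hab.le).trans_le hcard))
              hf' hg']
          · have hmeet : s ⊓ t = a := covby_meet hs ht hst
            subst hmeet
            obtain ⟨F, G, hF, hG, heq⟩ := hPS6 s t hs ht
            have hsb : s ≤ b := cc_le hf'
            have htb : t ≤ b := cc_le hg'
            obtain ⟨H, hH⟩ := cc_exists (Ω := Ω) hIcc (Set.Icc (s ⊔ t) b).ncard (s ⊔ t) b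
              (sup_le hsb htb) le_rfl
            have e1 : f' = Relation.Comp F H :=
              ih s b f' _
                (Nat.lt_succ_iff.mp ((icc_ssub hIcc hs.lt hsb le_rfl hab.le).trans_le hcard))
                hf' (cc_comp hF hH)
            have e2 : g' = Relation.Comp G H :=
              ih t b g' _
                (Nat.lt_succ_iff.mp ((icc_ssub hIcc ht.lt htb le_rfl hab.le).trans_le hcard))
                hg' (cc_comp hG hH)
            rw [e1, e2, ← Relation.comp_assoc, ← Relation.comp_assoc, heq]
    · subst hab
      rw [cc_refl_eq hf, cc_refl_eq hg]

end PolytoneAux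

section PhiLayer

variable {S : Type u} [Lattice S] {L : S → Type v}
  [∀ x, Lattice (L x)] [∀ x, BoundedOrder (L x)]
  {Ω : ∀ x y : S, x ⋖ y → L x → L y → Prop}
  {Φ : ∀ x y : S, x ≤ y → (L x → L y → Prop)}

lemma Φ_eq (hmin : MinimalAxioms L Ω) (hΦ : ∀ x y : S, ∀ h : x ≤ y, ChainComp L Ω x y (Φ x y h))
    {a b : S} {f : L a → L b → Prop} (hf : ChainComp L Ω a b f) (h : a ≤ b) : f = Φ a b h :=
  cc_unique hmin (Set.Icc a b).ncard a b f _ le_rfl hf (hΦ a b h)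

lemma Φ_fac_cover (hmin : MinimalAxioms L Ω)
    (hΦ : ∀ x y : S, ∀ h : x ≤ y, ChainComp L Ω x y (Φ x y h))
    {a s x : S} (hs : a ⋖ s) (hsx : s ≤ x) (hax : a ≤ x) :
    Φ a x hax = Relation.Comp (Ω a s hs) (Φ s x hsx) :=
  (Φ_eq hmin hΦ (ChainComp.cons hs (hΦ s x hsx)) hax).symm

lemma Φ_ne_congr {x y y' : S} (e : y = y') {h : x ≤ y} {h' : x ≤ y'} {u : L x} :
    (∃ v, Φ x y h u v) → ∃ v, Φ x y' h' u v := by subst e; exact id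

lemma Φ_ne2_congr {x y y' : S} (e : y = y') {h : x ≤ y} {h' : x ≤ y'} :
    (∃ u v, Φ x y h u v) → ∃ u v, Φ x y' h' u v := by subst e; exact id

lemma cc_mono (hmin : MinimalAxioms L Ω) {a b : S} {f : L a → L b → Prop}
    (hf : ChainComp L Ω a b f) :
    ∀ u u' v, f u v → u ≤ u' → ∃ v', f u' v' ∧ v ≤ v' := by
  have hPS3 := hmin.2.2.2.2.2.2.1
  induction hf with
  | refl a => intro u u' v huv hle; exact ⟨u', rfl, huv ▸ hle⟩
  | cons h hf ih =>
    intro u u' v huv hle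
    obtain ⟨w, hΩ, hfw⟩ := huv
    obtain ⟨w1, hΩ1⟩ := (hPS3 _ _ h).2.1.2.1 u ⟨w, hΩ⟩ u' hle
    have hj := (hPS3 _ _ h).2.2.2.1 u u' w w1 hΩ hΩ1
    rw [sup_eq_right.mpr hle] at hj
    obtain ⟨v', hfv', hvv'⟩ := ih w (w ⊔ w1) v hfw le_sup_left
    exact ⟨v', ⟨w ⊔ w1, hj, hfv'⟩, hvv'⟩

lemma G' (hmin : MinimalAxioms L Ω)
    (hΦ : ∀ x y : S, ∀ h : x ≤ y, ChainComp L Ω x y (Φ x y h)) :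
    ∀ n : ℕ, ∀ a x y : S, ∀ (hax : a ≤ x) (hay : a ≤ y),
    (Set.Icc a (x ⊔ y)).ncard ≤ n → ∀ u : L a,
    (∃ v, Φ a x hax u v) → (∃ v, Φ a y hay u v) →
    ∃ v, Φ a (x ⊔ y) (hax.trans le_sup_left) u v := by
  have hPS3 := hmin.2.2.2.2.2.2.1
  have hPS7 := hmin.2.2.2.2.2.2.2.2.1
  intro n
  induction n with
  | zero =>
    intro a x y hax hay hcard u h1 h2
    have hpos := (Set.ncard_pos (hmin.1 a (x ⊔ y))).mpr ⟨a, le_rfl, hax.trans le_sup_left⟩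
    omega
  | succ n ih =>
    intro a x y hax hay hcard u h1 h2
    rcases hax.lt_or_eq with haxlt | haxeq
    · rcases hay.lt_or_eq with haylt | hayeq
      · -- main case : a < x, a < y
        obtain ⟨s, hs, hsx⟩ := exists_covby_le hmin.1 haxlt
        obtain ⟨t, ht, hty⟩ := exists_covby_le hmin.1 haylt
        rw [Φ_fac_cover hmin hΦ hs hsx hax] at h1
        obtain ⟨v1, u1, hΩs, h1'⟩ := h1
        rw [Φ_fac_cover hmin hΦ ht hty hay] at h2
        obtain ⟨v2, u2, hΩt, h2'⟩ := h2
        by_cases hst : s = t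
        · subst hst
          have hu12 : u1 = u2 := (hPS3 a s hs).1.1 u u1 u2 hΩs hΩt
          rw [← hu12] at h2'
          have hcard' : (Set.Icc s (x ⊔ y)).ncard ≤ n :=
            Nat.lt_succ_iff.mp ((icc_ssub hmin.1 hs.lt (hsx.trans le_sup_left) le_rfl
              (hax.trans le_sup_left)).trans_le hcard)
          obtain ⟨w, hw⟩ := ih s x y hsx hty hcard' u1 ⟨v1, h1'⟩ ⟨v2, h2'⟩
          rw [Φ_fac_cover hmin hΦ hs (hsx.trans le_sup_left) (hax.trans le_sup_left)]
          exact ⟨w, u1, hΩs, hw⟩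
        · have hmeet : s ⊓ t = a := covby_meet hs ht hst
          subst hmeet
          obtain ⟨P7, hP7cc, hP7sub⟩ := hPS7 s t hs ht
          have hP7 : ∃ w, Φ (s ⊓ t) (s ⊔ t) (inf_le_left.trans le_sup_left) u w := by
            obtain ⟨w, hw⟩ := hP7sub ⟨⟨u1, hΩs⟩, ⟨u2, hΩt⟩⟩
            rw [← Φ_eq hmin hΦ hP7cc (inf_le_left.trans le_sup_left)]
            exact ⟨w, hw⟩
          have hA : ∃ w, Φ s (s ⊔ t) le_sup_left u1 w := by
            rw [Φ_fac_cover hmin hΦ hs le_sup_left (inf_le_left.trans le_sup_left)] at hP7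
            obtain ⟨w, u1', hΩs', hw⟩ := hP7
            have he : u1' = u1 := (hPS3 (s ⊓ t) s hs).1.1 u u1' u1 hΩs' hΩs
            exact ⟨w, he ▸ hw⟩
          have hxsty : x ⊔ (s ⊔ t) ≤ x ⊔ y :=
            sup_le le_sup_left (sup_le (hsx.trans le_sup_left) (hty.trans le_sup_right))
          have hcardB : (Set.Icc s (x ⊔ (s ⊔ t))).ncard ≤ n :=
            Nat.lt_succ_iff.mp ((icc_ssub hmin.1 hs.lt (hsx.trans le_sup_left) hxsty
              (hax.trans le_sup_left)).trans_le hcard)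
          have hB : ∃ w, Φ s (x ⊔ (s ⊔ t)) (hsx.trans le_sup_left) u1 w :=
            ih s x (s ⊔ t) hsx le_sup_left hcardB u1 ⟨v1, h1'⟩ hA
          have hB' : ∃ w, Φ (s ⊓ t) (x ⊔ (s ⊔ t)) (hax.trans le_sup_left) u w := by
            rw [Φ_fac_cover hmin hΦ hs (hsx.trans le_sup_left) (hax.trans le_sup_left)]
            obtain ⟨w, hw⟩ := hB
            exact ⟨w, u1, hΩs, hw⟩
          have httop : t ≤ x ⊔ (s ⊔ t) := le_sup_right.trans le_sup_right
          have hC : ∃ w, Φ t (x ⊔ (s ⊔ t)) httop u2 w := by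
            rw [Φ_fac_cover hmin hΦ ht httop (hax.trans le_sup_left)] at hB'
            obtain ⟨w, u2', hΩt', hw⟩ := hB'
            have he : u2' = u2 := (hPS3 (s ⊓ t) t ht).1.1 u u2' u2 hΩt' hΩt
            exact ⟨w, he ▸ hw⟩
          have efinal : (x ⊔ (s ⊔ t)) ⊔ y = x ⊔ y :=
            le_antisymm (sup_le hxsty le_sup_right) (sup_le (le_sup_left.trans le_sup_left) le_sup_right)
          have hcardD : (Set.Icc t ((x ⊔ (s ⊔ t)) ⊔ y)).ncard ≤ n :=
            Nat.lt_succ_iff.mp ((icc_ssub hmin.1 ht.lt (httop.trans le_sup_left) efinal.le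
              (hax.trans le_sup_left)).trans_le hcard)
          have hD : ∃ w, Φ t ((x ⊔ (s ⊔ t)) ⊔ y) (httop.trans le_sup_left) u2 w :=
            ih t (x ⊔ (s ⊔ t)) y httop hty hcardD u2 hC ⟨v2, h2'⟩
          have hE : ∃ w, Φ (s ⊓ t) ((x ⊔ (s ⊔ t)) ⊔ y)
              ((inf_le_left.trans hsx).trans (le_sup_left.trans le_sup_left)) u w := by
            rw [Φ_fac_cover hmin hΦ ht (httop.trans le_sup_left) ((inf_le_left.trans hsx).trans (le_sup_left.trans le_sup_left))]
            obtain ⟨w, hw⟩ := hD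
            exact ⟨w, u2, hΩt, hw⟩
          exact Φ_ne_congr efinal hE
      · subst hayeq
        exact Φ_ne_congr (sup_eq_left.mpr hax).symm h1
    · subst haxeq
      exact Φ_ne_congr (sup_eq_right.mpr hay).symm h2

end PhiLayer

section T1Layer

variable {S : Type u} [Lattice S] {L : S → Type v}
  [∀ x, Lattice (L x)] [∀ x, BoundedOrder (L x)]
  {Ω : ∀ x y : S, x ⋖ y → L x → L y → Prop}
  {Φ : ∀ x y : S, x ≤ y → (L x → L y → Prop)}

lemma T1 (hmin : MinimalAxioms L Ω)
    (hΦ : ∀ x y : S, ∀ h : x ≤ y, ChainComp L Ω x y (Φ x y h)) :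
    ∀ n : ℕ, ∀ x x' d : S, ∀ (hxx' : x ≤ x') (hxd : x ≤ d),
    (Set.Icc x (x' ⊔ d)).ncard ≤ n →
    (∃ u v, Φ x x' hxx' u v) → ∃ u v, Φ d (x' ⊔ d) le_sup_right u v := by
  have hPS3 := hmin.2.2.2.2.2.2.1
  have hPS7 := hmin.2.2.2.2.2.2.2.2.1
  intro n
  induction n with
  | zero =>
    intro x x' d hxx' hxd hcard h1
    have hpos := (Set.ncard_pos (hmin.1 x (x' ⊔ d))).mpr ⟨x, le_rfl, hxx'.trans le_sup_left⟩
    omega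
  | succ n ih =>
    intro x x' d hxx' hxd hcard h1
    rcases hxx'.lt_or_eq with hlt | heq
    · rcases hxd.lt_or_eq with hdlt | hdeq
      · -- main case : x < x', x < d
        obtain ⟨s, hs, hsx'⟩ := exists_covby_le hmin.1 hlt
        obtain ⟨t, ht, htd⟩ := exists_covby_le hmin.1 hdlt
        -- top is in the domain of Φ x x'
        obtain ⟨u0, v0, h0⟩ := h1
        obtain ⟨v, hv, -⟩ := cc_mono hmin (hΦ x x' hxx') u0 ⊤ v0 h0 le_top
        have hv2 := hv
        rw [Φ_fac_cover hmin hΦ hs hsx' hxx'] at hv2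
        obtain ⟨u1, hΩs, h1'⟩ := hv2
        by_cases hst : s = t
        · subst hst
          have hcard' : (Set.Icc s (x' ⊔ d)).ncard ≤ n :=
            Nat.lt_succ_iff.mp ((icc_ssub hmin.1 hs.lt (hsx'.trans le_sup_left) le_rfl
              (hxx'.trans le_sup_left)).trans_le hcard)
          exact ih s x' d hsx' htd hcard' ⟨u1, v, h1'⟩
        · have hmeet : s ⊓ t = x := covby_meet hs ht hst
          subst hmeet
          -- top is in the domain of Ω _ t
          obtain ⟨w0, hw0⟩ := (hPS3 (s ⊓ t) t ht).2.1.1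
          obtain ⟨u2, hΩt⟩ := (hPS3 (s ⊓ t) t ht).2.1.2.1 w0 hw0 ⊤ le_top
          obtain ⟨P7, hP7cc, hP7sub⟩ := hPS7 s t hs ht
          have hP7 : ∃ w, Φ (s ⊓ t) (s ⊔ t) (inf_le_left.trans le_sup_left) (⊤ : L (s ⊓ t)) w := by
            obtain ⟨w, hw⟩ := hP7sub ⟨⟨u1, hΩs⟩, ⟨u2, hΩt⟩⟩
            rw [← Φ_eq hmin hΦ hP7cc (inf_le_left.trans le_sup_left)]
            exact ⟨w, hw⟩
          have hG := G' hmin hΦ (Set.Icc (s ⊓ t) (x' ⊔ (s ⊔ t))).ncard (s ⊓ t) x' (s ⊔ t)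
            hxx' (inf_le_left.trans le_sup_left) le_rfl ⊤ ⟨v, hv⟩ hP7
          have httop : t ≤ x' ⊔ (s ⊔ t) := le_sup_right.trans le_sup_right
          rw [Φ_fac_cover hmin hΦ ht httop (hxx'.trans le_sup_left)] at hG
          obtain ⟨w, u2', hΩt', hC⟩ := hG
          have efinal : (x' ⊔ (s ⊔ t)) ⊔ d = x' ⊔ d :=
            le_antisymm
              (sup_le (sup_le le_sup_left (sup_le (hsx'.trans le_sup_left) (htd.trans le_sup_right)))
                le_sup_right)
              (sup_le (le_sup_left.trans le_sup_left) le_sup_right)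
          have hcardD : (Set.Icc t ((x' ⊔ (s ⊔ t)) ⊔ d)).ncard ≤ n :=
            Nat.lt_succ_iff.mp ((icc_ssub hmin.1 ht.lt (httop.trans le_sup_left) efinal.le
              (hxx'.trans le_sup_left)).trans_le hcard)
          have hD := ih t (x' ⊔ (s ⊔ t)) d httop htd hcardD ⟨u2', w, hC⟩
          exact Φ_ne2_congr efinal hD
      · subst hdeq
        exact Φ_ne2_congr (sup_eq_left.mpr hxx').symm h1
    · subst heq
      refine Φ_ne2_congr (h := le_rfl) (sup_eq_right.mpr hxd).symm ?_
      refine ⟨⊤, ⊤, ?_⟩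
      rw [← Φ_eq hmin hΦ (ChainComp.refl d) le_rfl]

end T1Layer


/-- The ordered relation ξ on `S`: `x ξ y` iff `x ≤ y` and `Φ x y` is not empty. -/
def xiRel {S : Type u} [Lattice S] {L : S → Type v}
    (Φ : ∀ x y : S, x ≤ y → (L x → L y → Prop)) (x y : S) : Prop :=
  ∃ h : x ≤ y, ∃ u v, Φ x y h u v

theorem xi_join_two {S : Type u} [Lattice S] (L : S → Type v)
    [∀ x, Lattice (L x)] [∀ x, BoundedOrder (L x)]
    (Ω : ∀ x y : S, x ⋖ y → L x → L y → Prop)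
    (hmin : MinimalAxioms L Ω)
    (Φ : ∀ x y : S, x ≤ y → (L x → L y → Prop))
    (hΦ : ∀ x y : S, ∀ h : x ≤ y, ChainComp L Ω x y (Φ x y h)) :
    ∀ x x' y y' : S, xiRel Φ x x' → xiRel Φ y y' →
      xiRel Φ (x ⊔ y) (x' ⊔ y') := by
  intro x x' y y' hx hy
  obtain ⟨hxx', hxne⟩ := hx
  obtain ⟨hyy', hyne⟩ := hy
  have hsup : x ⊔ y ≤ x' ⊔ y' := sup_le (hxx'.trans le_sup_left) (hyy'.trans le_sup_right)
  have hA := T1 hmin hΦ (Set.Icc x (x' ⊔ (x ⊔ y))).ncard x x' (x ⊔ y) hxx' le_sup_left le_rfl hxne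
  have hB := T1 hmin hΦ (Set.Icc y (y' ⊔ (x ⊔ y))).ncard y y' (x ⊔ y) hyy' le_sup_right le_rfl hyne
  obtain ⟨uA, vA, hAv⟩ := hA
  obtain ⟨vA', hA', -⟩ := cc_mono hmin (hΦ (x ⊔ y) (x' ⊔ (x ⊔ y)) le_sup_right) uA ⊤ vA hAv le_top
  obtain ⟨uB, vB, hBv⟩ := hB
  obtain ⟨vB', hB', -⟩ := cc_mono hmin (hΦ (x ⊔ y) (y' ⊔ (x ⊔ y)) le_sup_right) uB ⊤ vB hBv le_top
  have hG := G' hmin hΦ (Set.Icc (x ⊔ y) ((x' ⊔ (x ⊔ y)) ⊔ (y' ⊔ (x ⊔ y)))).ncard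
    (x ⊔ y) (x' ⊔ (x ⊔ y)) (y' ⊔ (x ⊔ y)) le_sup_right le_sup_right le_rfl ⊤
    ⟨vA', hA'⟩ ⟨vB', hB'⟩
  obtain ⟨w, hw⟩ := hG
  refine ⟨hsup, ?_⟩
  have e : (x' ⊔ (x ⊔ y)) ⊔ (y' ⊔ (x ⊔ y)) = x' ⊔ y' :=
    le_antisymm (sup_le (sup_le le_sup_left hsup) (sup_le le_sup_right hsup))
      (sup_le (le_sup_left.trans le_sup_left) (le_sup_left.trans le_sup_right))
  exact Φ_ne2_congr e ⟨⊤, w, hw⟩
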